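/- arXiv:1309.0577 — 3 statements merged into one kernel-verified Lean document; each statement's English description precedes it below -/
import Mathlib

section
/- Let p be a prime, let c₀ ≥ 1 be a natural number, and let λ ∈ ℤ_p. Assume that either (i) λ is the image of a natural number, or (ii) the quotient λ^{m}/m tends to infinity as m → ∞. Then there exists a strictly increasing sequence of positive integers k₀ < k₁ < k₂ < ⋯ such that for every i: (a) k_i ≥ c₀·(2 + ⌈log_p k_{i+1}⌉) + 1, and (b) there is no natural number n with k_i ≤ n < k_{i+1} such that p^{⌈log_p k_{i+1}⌉} divides λ − n in ℤ_p. -/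
/-!
For every large `a` there is `b > a` with `c₀ (2 + ⌈log_p b⌉) + 1 ≤ a` such that the
representative `λ^{⌈log_p b⌉}` avoids `[a, b)`: as `b ≤ p^{⌈log_p b⌉}`, it is the only natural
number below `b` congruent to `λ`. Iterating this step gives the sequence.

If `λ = n₀`, take `b = a + 1`: the representative is at most `n₀ < a`, and `⌈log_p (a+1)⌉` grows
logarithmically. If `λ^{m}/m → ∞`, take `b = λ^{m}` for the least `m` with `a < λ^{m}`: the
representative modulo `p^{⌈log_p b⌉}` is `b` itself or `0`, and `a ≥ λ^{m-1}` is large compared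
with `m ≥ ⌈log_p b⌉`.
-/

open Filter

theorem exists_strictMono_forall_rel_succ {α : Type*} [Preorder α] {R : α → α → Prop} {N : α}
    (h : ∀ a, N ≤ a → ∃ b, a < b ∧ R a b) :
    ∃ k : ℕ → α, StrictMono k ∧ ∀ i, R (k i) (k (i + 1)) := by
  have : Nonempty α := ⟨N⟩
  choose! f hf using h
  have hN : ∀ i, N ≤ f^[i] N := by
    intro i
    induction i with
    | zero => exact le_rfl
    | succ i ih => rw [Function.iterate_succ_apply']; exact ih.trans (hf _ ih).1.le
  refine ⟨fun i => f^[i] N, strictMono_nat_of_lt_succ fun i => ?_, fun i => ?_⟩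
  · rw [Function.iterate_succ_apply']; exact (hf _ (hN i)).1
  · show R (f^[i] N) (f^[i + 1] N)
    rw [Function.iterate_succ_apply']; exact (hf _ (hN i)).2

theorem Nat.eventually_mul_add_le_pow {p : ℕ} (hp : 1 < p) (c d : ℕ) :
    ∀ᶠ j in atTop, c * j + d ≤ p ^ j := by
  have hp' : (1 : ℝ) < p := by exact_mod_cast hp
  have hlim : Tendsto (fun j : ℕ => (c * j + d : ℝ) / (p : ℝ) ^ j) atTop (nhds 0) := by
    have h := ((tendsto_pow_const_div_const_pow_of_one_lt 1 hp').const_mul (c : ℝ)).add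
      ((tendsto_pow_const_div_const_pow_of_one_lt 0 hp').const_mul (d : ℝ))
    simp only [pow_one, pow_zero, mul_zero, add_zero] at h
    exact h.congr fun j => by ring
  filter_upwards [hlim.eventually (gt_mem_nhds one_pos)] with j hj
  rw [div_lt_one (by positivity)] at hj
  exact_mod_cast hj.le

theorem Nat.eventually_mul_clog_succ_le {p : ℕ} (hp : 1 < p) (c : ℕ) :
    ∀ᶠ a in atTop, c * (2 + Nat.clog p (a + 1)) + 1 ≤ a := by
  obtain ⟨J, hJ⟩ := eventually_atTop.1 (eventually_mul_add_le_pow hp c (3 * c + 1))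
  filter_upwards [eventually_ge_atTop (p ^ J)] with a ha
  obtain ⟨j, hj⟩ :=
    Nat.exists_eq_add_of_lt ((Nat.lt_clog_iff_pow_lt hp).2 (Nat.lt_add_one_of_le ha))
  have hpow : p ^ (J + j) < a + 1 := (Nat.lt_clog_iff_pow_lt hp).1 (by omega)
  calc c * (2 + Nat.clog p (a + 1)) + 1 = c * (J + j) + (3 * c + 1) := by rw [hj]; ring
    _ ≤ p ^ (J + j) := hJ _ (Nat.le_add_right J j)
    _ ≤ a := Nat.lt_succ_iff.1 hpow

theorem Nat.eventually_mul_add_le_of_tendsto_div {f : ℕ → ℕ}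
    (hf : Tendsto (fun m => (f m : ℝ) / m) atTop atTop) (c d : ℕ) :
    ∀ᶠ m in atTop, c * m + d ≤ f m := by
  filter_upwards [hf.eventually_ge_atTop ((c + d : ℕ) : ℝ), eventually_ge_atTop 1] with m hm hm1
  rw [le_div_iff₀ (by exact_mod_cast hm1)] at hm
  have : (c + d) * m ≤ f m := by exact_mod_cast hm
  nlinarith

namespace PadicInt

variable {p : ℕ} [Fact p.Prime]

theorem appr_eq_mod_of_dvd {x : ℤ_[p]} {m n : ℕ} (h : (p : ℤ_[p]) ^ m ∣ x - n) :
    x.appr m = n % p ^ m := by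
  have := zmod_congr_of_sub_mem_span m x _ n (appr_spec m x) (Ideal.mem_span_singleton.2 h)
  rwa [ZMod.natCast_eq_natCast_iff', Nat.mod_eq_of_lt (appr_lt x m)] at this

theorem not_exists_dvd_sub_of_appr_notMem_Ico {x : ℤ_[p]} {m a b : ℕ} (hb : b ≤ p ^ m)
    (hx : x.appr m ∉ Set.Ico a b) :
    ¬ ∃ n : ℕ, a ≤ n ∧ n < b ∧ (p : ℤ_[p]) ^ m ∣ x - n := by
  rintro ⟨n, han, hnb, hdvd⟩
  rw [appr_eq_mod_of_dvd hdvd, Nat.mod_eq_of_lt (hnb.trans_le hb)] at hx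
  exact hx ⟨han, hnb⟩

theorem appr_clog_appr_notMem_Ico (x : ℤ_[p]) (m : ℕ) {a : ℕ} (ha : 0 < a) :
    x.appr (Nat.clog p (x.appr m)) ∉ Set.Ico a (x.appr m) := by
  set b := x.appr m
  have hp : 1 < p := (Fact.out : p.Prime).one_lt
  have hk : Nat.clog p b ≤ m := Nat.clog_le_of_le_pow (x.appr_lt m).le
  have hmod : x.appr (Nat.clog p b) = b % p ^ Nat.clog p b :=
    appr_eq_mod_of_dvd ((pow_dvd_pow _ hk).trans (Ideal.mem_span_singleton.1 (appr_spec m x)))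
  rcases (Nat.le_pow_clog hp b).lt_or_eq with hlt | heq
  · rw [hmod, Nat.mod_eq_of_lt hlt]
    exact fun h => h.2.false
  · rw [hmod, ← heq, Nat.mod_self]
    exact fun h => by have := h.1; omega

end PadicInt

open PadicInt

def IsGoodStep (p c₀ : ℕ) [Fact p.Prime] (l : ℤ_[p]) (a b : ℕ) : Prop :=
  c₀ * (2 + Nat.clog p b) + 1 ≤ a ∧
    ¬ ∃ n : ℕ, a ≤ n ∧ n < b ∧ (p : ℤ_[p]) ^ Nat.clog p b ∣ l - n

section IsGoodStep

variable {p : ℕ} [Fact p.Prime] (c₀ : ℕ)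

theorem eventually_isGoodStep_natCast_succ (n₀ : ℕ) :
    ∀ᶠ a in atTop, IsGoodStep p c₀ (n₀ : ℤ_[p]) a (a + 1) := by
  have hp : 1 < p := (Fact.out : p.Prime).one_lt
  filter_upwards [Nat.eventually_mul_clog_succ_le hp c₀, eventually_gt_atTop n₀] with a hsize hn₀
  refine ⟨hsize, not_exists_dvd_sub_of_appr_notMem_Ico (Nat.le_pow_clog hp _) fun h => ?_⟩
  rw [appr_eq_mod_of_dvd (x := (n₀ : ℤ_[p])) (n := n₀) (by rw [sub_self]; exact dvd_zero _)] at h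
  have := Nat.mod_le n₀ (p ^ Nat.clog p (a + 1))
  exact absurd h.1 (by omega)

theorem eventually_exists_isGoodStep_of_tendsto {l : ℤ_[p]}
    (hl : Tendsto (fun m : ℕ => (l.appr m : ℝ) / (m : ℝ)) atTop atTop) :
    ∀ᶠ a in atTop, ∃ b, a < b ∧ IsGoodStep p c₀ l a b := by
  obtain ⟨M, hM⟩ :=
    eventually_atTop.1 (Nat.eventually_mul_add_le_of_tendsto_div hl c₀ (3 * c₀ + 1))
  filter_upwards [eventually_ge_atTop (l.appr M)] with a ha
  classical
  have hex : ∃ m, a < l.appr m :=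
    ((Nat.eventually_mul_add_le_of_tendsto_div hl 0 (a + 1)).exists).imp fun m hm => by omega
  have hMm : M < Nat.find hex := by
    by_contra! h
    exact absurd (Nat.find_spec hex) (not_lt.2 ((l.appr_mono h).trans ha))
  obtain ⟨j, hj⟩ := Nat.exists_eq_add_of_lt hMm
  have hja : l.appr (M + j) ≤ a := not_lt.1 (Nat.find_min hex (by omega))
  have hclog : Nat.clog p (l.appr (Nat.find hex)) ≤ M + j + 1 :=
    hj ▸ Nat.clog_le_of_le_pow (l.appr_lt _).le
  have hsize : c₀ * (2 + Nat.clog p (l.appr (Nat.find hex))) + 1 ≤ a :=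
    calc c₀ * (2 + Nat.clog p (l.appr (Nat.find hex))) + 1 ≤ c₀ * (M + j) + (3 * c₀ + 1) := by
          nlinarith
      _ ≤ l.appr (M + j) := hM _ (Nat.le_add_right M j)
      _ ≤ a := hja
  exact ⟨_, Nat.find_spec hex, hsize, not_exists_dvd_sub_of_appr_notMem_Ico
    (Nat.le_pow_clog (Fact.out : p.Prime).one_lt _) (appr_clog_appr_notMem_Ico l _ (by omega))⟩

end IsGoodStep

theorem exists_good_sequence_padicInt_general
    {p : ℕ} [Fact p.Prime] (c₀ : ℕ) (l : ℤ_[p])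
    (hl : (∃ n : ℕ, l = n) ∨
      Filter.Tendsto (fun m : ℕ => (l.appr m : ℝ) / (m : ℝ)) Filter.atTop Filter.atTop) :
    ∃ k : ℕ → ℕ, StrictMono k ∧ (∀ i, 0 < k i) ∧
      ∀ i, c₀ * (2 + Nat.clog p (k (i + 1))) + 1 ≤ k i ∧
        ¬ ∃ n : ℕ, k i ≤ n ∧ n < k (i + 1) ∧
          (p : ℤ_[p]) ^ (Nat.clog p (k (i + 1))) ∣ (l - n) := by
  have hstep : ∀ᶠ a in atTop, ∃ b, a < b ∧ IsGoodStep p c₀ l a b := by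
    rcases hl with ⟨n₀, rfl⟩ | hl
    · exact (eventually_isGoodStep_natCast_succ c₀ n₀).mono fun a ha => ⟨a + 1, a.lt_succ_self, ha⟩
    · exact eventually_exists_isGoodStep_of_tendsto c₀ hl
  obtain ⟨N, hN⟩ := eventually_atTop.1 hstep
  obtain ⟨k, hk, hgood⟩ := exists_strictMono_forall_rel_succ hN
  exact ⟨k, hk, fun i => by have := (hgood i).1; omega, hgood⟩

/-- Lemma 4.2 (for `λ ∈ ℤ_p`): under condition (*), there is a strictly increasing sequence of
positive integers `k₀ < k₁ < ⋯` such that `k i ≥ c₀ (2 + ⌈log_p k_{i+1}⌉) + 1` and no natural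
number in `[k i, k (i+1))` is congruent to `λ` modulo `p^{⌈log_p k_{i+1}⌉}`. -/
theorem exists_good_sequence_padicInt
    {p : ℕ} [Fact p.Prime] (c₀ : ℕ) (hc₀ : 1 ≤ c₀) (l : ℤ_[p])
    (hl : (∃ n : ℕ, l = n) ∨
      Filter.Tendsto (fun m : ℕ => (l.appr m : ℝ) / (m : ℝ)) Filter.atTop Filter.atTop) :
    ∃ k : ℕ → ℕ, StrictMono k ∧ (∀ i, 0 < k i) ∧
      ∀ i, c₀ * (2 + Nat.clog p (k (i + 1))) + 1 ≤ k i ∧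
        ¬ ∃ n : ℕ, k i ≤ n ∧ n < k (i + 1) ∧
          (p : ℤ_[p]) ^ (Nat.clog p (k (i + 1))) ∣ (l - n) :=
  exists_good_sequence_padicInt_general c₀ l hl
end

section
/- Let p be a prime and let μ be a Haar measure on the compact additive group ℤ_p, normalized so that μ(ℤ_p) = 1. Then the set of λ ∈ ℤ_p such that λ is not the image of any natural number and the quotient λ^{m}/m does not tend to infinity as m → ∞ has μ-measure zero. Equivalently, μ-almost every λ ∈ ℤ_p satisfies the paper's condition (*). -/
/-! If `λ^{m}/m` does not tend to infinity, then `λ^{m} ≤ C m` for some `C : ℕ` and infinitely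
many `m`. For fixed `m`, the condition `λ^{m} ≤ C m` cuts out `C m + 1` cosets of `p^m ℤ_p`, each
of Haar measure `μ(ℤ_p) / p^m`; since `∑ₘ (C m + 1) / p^m < ∞`, Borel–Cantelli shows that, for
each `C`, the `λ` satisfying it for infinitely many `m` form a null set. -/

open MeasureTheory Filter
open scoped ENNReal NNReal

theorem exists_frequently_le_mul_of_not_tendsto_div {u : ℕ → ℕ}
    (h : ¬ Tendsto (fun m => (u m : ℝ) / m) atTop atTop) :
    ∃ C : ℕ, ∃ᶠ m in atTop, u m ≤ C * m := by
  obtain ⟨b, hb⟩ : ∃ b : ℝ, ∃ᶠ m in atTop, (u m : ℝ) / m < b := by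
    simpa [tendsto_atTop, Filter.not_eventually, Filter.frequently_atTop] using h
  refine ⟨⌈b⌉₊, (hb.and_eventually (eventually_gt_atTop 0)).mono fun m ⟨hm, hm_gt⟩ => ?_⟩
  have hm_pos : (0 : ℝ) < m := mod_cast hm_gt
  have : (u m : ℝ) ≤ ⌈b⌉₊ * m := calc
    (u m : ℝ) ≤ b * m := ((div_lt_iff₀ hm_pos).mp hm).le
    _ ≤ ⌈b⌉₊ * m := by gcongr; exact Nat.le_ceil b
  exact_mod_cast this

theorem ENNReal.tsum_mul_add_one_div_pow_ne_top {q : ℕ} (hq : 1 < q) (C : ℕ) :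
    ∑' m : ℕ, ((C * m + 1 : ℕ) : ℝ≥0∞) / (q : ℝ≥0∞) ^ m ≠ ∞ := by
  have hr : ‖(q : ℝ)⁻¹‖ < 1 := by
    rw [norm_inv, Real.norm_natCast]
    exact inv_lt_one_of_one_lt₀ (mod_cast hq)
  have hsum : Summable fun m : ℕ => ((C * m + 1 : ℕ) : ℝ≥0) / (q : ℝ≥0) ^ m := by
    rw [← NNReal.summable_coe]
    refine (((summable_pow_mul_geometric_of_norm_lt_one 1 hr).mul_left (C : ℝ)).add
      (summable_geometric_of_norm_lt_one hr)).congr fun m => ?_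
    push_cast
    ring
  convert ENNReal.tsum_coe_ne_top_iff_summable.mpr hsum using 3 with m
  rw [ENNReal.coe_div (pow_ne_zero _ (mod_cast (zero_lt_one.trans hq).ne'))]
  push_cast
  rfl

theorem AddMonoidHom.index_ker_mul_measure_preimage_singleton_le {G A : Type*} [AddGroup G]
    [MeasurableSpace G] [MeasurableAdd G] [AddGroup A] (μ : Measure G) [μ.IsAddLeftInvariant]
    (f : G →+ A) (hf : MeasurableSet (f.ker : Set G)) (a : A) :
    f.ker.index * μ (f ⁻¹' {a}) ≤ μ Set.univ := by
  obtain hfin | hinf := em f.ker.FiniteIndex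
  swap
  · simp [AddSubgroup.finiteIndex_iff.not_left.mp hinf]
  obtain ⟨g, rfl⟩ | ha := em (a ∈ Set.range f)
  · have hcoset : f ⁻¹' {f g} = (fun x => -g + x) ⁻¹' f.ker := by
      ext x
      simp only [Set.mem_preimage, Set.mem_singleton_iff, SetLike.mem_coe, AddMonoidHom.mem_ker,
        map_add, map_neg, neg_add_eq_zero]
      exact eq_comm
    rw [hcoset, measure_preimage_add, AddSubgroup.index_mul_measure _ hf]
  · simp [Set.preimage_singleton_eq_empty.mpr ha]

namespace PadicInt

variable {p : ℕ} [Fact p.Prime]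

theorem index_ker_toZModPow (m : ℕ) :
    (toZModPow m : ℤ_[p] →+* ZMod (p ^ m)).toAddMonoidHom.ker.index = p ^ m := by
  rw [AddSubgroup.index_ker, AddMonoidHom.range_eq_top.mpr (ZMod.ringHom_surjective _),
    Nat.card_congr AddSubgroup.topEquiv.toEquiv, Nat.card_zmod]

theorem coe_ker_toZModPow (m : ℕ) :
    ((toZModPow m : ℤ_[p] →+* ZMod (p ^ m)).toAddMonoidHom.ker : Set ℤ_[p]) =
      {x | ‖x‖ ≤ (p : ℝ) ^ (-(m : ℤ))} := by
  ext x
  rw [Set.mem_ofPred_eq, norm_le_pow_iff_mem_span_pow, ← ker_toZModPow]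
  rfl

theorem isClosed_ker_toZModPow (m : ℕ) :
    IsClosed ((toZModPow m : ℤ_[p] →+* ZMod (p ^ m)).toAddMonoidHom.ker : Set ℤ_[p]) := by
  rw [coe_ker_toZModPow]
  exact isClosed_le continuous_norm continuous_const

variable [MeasurableSpace ℤ_[p]] [BorelSpace ℤ_[p]] (μ : Measure ℤ_[p]) [μ.IsAddLeftInvariant]

theorem measure_setOf_appr_eq_le (m k : ℕ) :
    μ {x | x.appr m = k} ≤ μ Set.univ / (p : ℝ≥0∞) ^ m := by
  have h := (toZModPow m).toAddMonoidHom.index_ker_mul_measure_preimage_singleton_le μ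
    (isClosed_ker_toZModPow m).measurableSet (k : ZMod (p ^ m))
  rw [index_ker_toZModPow, Nat.cast_pow] at h
  rw [ENNReal.le_div_iff_mul_le (by simp [(Fact.out : p.Prime).ne_zero]) (by simp), mul_comm]
  refine le_trans (mul_le_mul_right (measure_mono ?_) _) h
  intro x (hx : x.appr m = k)
  -- `toZModPow m x` is `(x.appr m : ZMod (p ^ m))` by definition.
  change (x.appr m : ZMod (p ^ m)) = k
  rw [hx]

theorem measure_setOf_appr_le_le (m N : ℕ) :
    μ {x | x.appr m ≤ N} ≤ (N + 1 : ℕ) / (p : ℝ≥0∞) ^ m * μ Set.univ := by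
  have hcover : {x : ℤ_[p] | x.appr m ≤ N} = ⋃ k ∈ Finset.range (N + 1), {x | x.appr m = k} := by
    ext x
    simp
  calc μ {x | x.appr m ≤ N}
      ≤ ∑ k ∈ Finset.range (N + 1), μ {x | x.appr m = k} := by
        rw [hcover]
        exact measure_biUnion_finset_le _ _
    _ ≤ ∑ k ∈ Finset.range (N + 1), μ Set.univ / (p : ℝ≥0∞) ^ m :=
        Finset.sum_le_sum fun k _ => measure_setOf_appr_eq_le μ m k
    _ = (N + 1 : ℕ) / (p : ℝ≥0∞) ^ m * μ Set.univ := by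
        simp only [Finset.sum_const, Finset.card_range, nsmul_eq_mul, div_eq_mul_inv]
        ring

end PadicInt

theorem measure_bad_set_eq_zero_general
    {p : ℕ} [Fact p.Prime] [MeasurableSpace ℤ_[p]] [BorelSpace ℤ_[p]]
    (μ : Measure ℤ_[p]) [μ.IsAddHaarMeasure] :
    μ {l : ℤ_[p] |
        l ∉ Set.range ((↑·) : ℕ → ℤ_[p]) ∧
        ¬ Tendsto (fun m : ℕ => (l.appr m : ℝ) / (m : ℝ)) atTop atTop} = 0 := by
  refine measure_mono_null (fun l hl => Set.mem_iUnion.mpr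
    (exists_frequently_le_mul_of_not_tendsto_div hl.2)) (measure_iUnion_null fun C => ?_)
  apply measure_setOfPred_frequently_eq_zero
  refine ne_top_of_le_ne_top ?_ (ENNReal.tsum_le_tsum fun m =>
    PadicInt.measure_setOf_appr_le_le μ m (C * m))
  rw [ENNReal.tsum_mul_right]
  exact ENNReal.mul_ne_top (ENNReal.tsum_mul_add_one_div_pow_ne_top
    (Fact.out : p.Prime).one_lt C) (measure_ne_top μ _)

/-- Almost every `λ ∈ ℤ_p` (with respect to the normalized Haar measure) satisfies
condition (*): the set of `λ` that are not natural numbers and for which `λ^{m}/m` does not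
tend to infinity has measure zero. -/
theorem measure_bad_set_eq_zero
    {p : ℕ} [Fact p.Prime] [MeasurableSpace ℤ_[p]] [BorelSpace ℤ_[p]]
    (μ : Measure ℤ_[p]) [μ.IsAddHaarMeasure] (hμ : μ Set.univ = 1) :
    μ {l : ℤ_[p] |
        l ∉ Set.range ((↑·) : ℕ → ℤ_[p]) ∧
        ¬ Tendsto (fun m : ℕ => (l.appr m : ℝ) / (m : ℝ)) atTop atTop} = 0 :=
  measure_bad_set_eq_zero_general μ
end

section
/- Let A be a compact topological ring and let B be a normed ring whose norm is power-multiplicative, i.e. ‖b^n‖ = ‖b‖^n for every b ∈ B and every n ≥ 1. Then every continuous ring homomorphism φ : A → B satisfies ‖φ(a)‖ ≤ 1 for all a ∈ A; that is, the image of φ is contained in the closed unit ball of B. -/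
/-! Since `A` is compact, the continuous function `a ↦ ‖φ a‖` is bounded, say by `C`. For every
`a` and `n ≥ 1` this gives `‖φ a‖ ^ n = ‖φ (a ^ n)‖ ≤ C`, which forces `‖φ a‖ ≤ 1`. -/

theorem IsPowMul.le_one_of_bddAbove_range_pow {R : Type*} [Monoid R] {f : R → ℝ}
    (hf : IsPowMul f) {x : R} (hx : BddAbove (Set.range fun n : ℕ => f (x ^ n))) :
    f x ≤ 1 := by
  obtain ⟨C, hC⟩ := hx
  by_contra! hx1
  obtain ⟨n, hn⟩ := pow_unbounded_of_one_lt C hx1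
  have hle : f x ^ (n + 1) ≤ C := hf x n.succ_pos ▸ hC ⟨n + 1, rfl⟩
  exact (hn.trans_le (pow_le_pow_right₀ hx1.le n.le_succ)).not_ge hle

theorem continuous_ringHom_image_le_one_general
    {A B : Type*} [Ring A] [TopologicalSpace A] [CompactSpace A]
    [NormedRing B]
    (hpm : ∀ (b : B) (n : ℕ), 1 ≤ n → ‖b ^ n‖ = ‖b‖ ^ n)
    (φ : A →+* B) (hφ : Continuous φ) :
    ∀ a : A, ‖φ a‖ ≤ 1 := by
  intro a
  have hbdd : BddAbove (Set.range fun a => ‖φ a‖) :=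
    (isCompact_range (continuous_norm.comp hφ)).bddAbove
  refine IsPowMul.le_one_of_bddAbove_range_pow (fun b _ hn => hpm b _ hn) (hbdd.mono ?_)
  rintro _ ⟨n, rfl⟩
  exact ⟨a ^ n, by simp only [map_pow]⟩

/-- A continuous ring homomorphism from a compact topological ring to a normed ring with
power-multiplicative norm has image in the closed unit ball. -/
theorem continuous_ringHom_image_le_one
    {A B : Type*} [Ring A] [TopologicalSpace A] [IsTopologicalRing A] [CompactSpace A]
    [NormedRing B]
    (hpm : ∀ (b : B) (n : ℕ), 1 ≤ n → ‖b ^ n‖ = ‖b‖ ^ n)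
    (φ : A →+* B) (hφ : Continuous φ) :
    ∀ a : A, ‖φ a‖ ≤ 1 :=
  continuous_ringHom_image_le_one_general hpm φ hφ
end
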